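/- arXiv:1504.03227 — 4 statements merged into one kernel-verified Lean document; each statement's English description precedes it below -/
import Mathlib

section
/- Let p be a prime, m and n positive integers with m < n. Define S_n^{(m)}(p) as the sum of 1/(l_1⋯l_n) over n-tuples of positive integers with l_1+⋯+l_n = mp, each l_i < p and coprime to p; and R_n^{(m)}(p) as the same sum but only requiring each l_i coprime to p (no upper bound). Then S_n^{(m)}(p) ≡ Σ_{k=0}^{m-1} C(n,k)·(-1)^k·R_n^{(m-k)}(p) (mod p). -/
/-- `x ≡ y (mod p^r)` as p-integral rationals. -/
def ratCong (p r : ℕ) (x y : ℚ) : Prop :=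
  ∃ z : ℚ, x - y = (p : ℚ) ^ r * z ∧ ¬ (p ∣ z.den)

/-- `R_n^{(m)}(p)`-type sum: positive `n`-tuples summing to `N`, each coprime to `p`. -/
def hsum (p n N : ℕ) : ℚ :=
  ∑ l ∈ (Fintype.piFinset fun _ : Fin n => Finset.Icc 1 N) |>.filter
      (fun l => ∑ i, l i = N ∧ ∀ i, ¬ p ∣ l i),
    ∏ i, (1 : ℚ) / l i

/-- `S_n^{(m)}(p)`-type sum: additionally each `lᵢ < p`. -/
def hsumLtCop (p n N : ℕ) : ℚ :=
  ∑ l ∈ (Fintype.piFinset fun _ : Fin n => Finset.Ico 1 p) |>.filter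
      (fun l => ∑ i, l i = N ∧ ∀ i, ¬ p ∣ l i),
    ∏ i, (1 : ℚ) / l i

/-!
Every part of a composition counted by `hsum` is coprime to `p`, hence different from `p`, so
inclusion–exclusion over the set `T` of parts exceeding `p` writes `S_n^{(m)}(p)` as
`∑_T (-1)^|T|` times the sum over compositions with `lᵢ > p` for `i ∈ T`. That sum is empty once
`|T| ≥ m`; otherwise subtracting `p` from the parts in `T` turns it into `R_n^{(m-|T|)}(p)` with
every factor `1/(a+p)` replaced by `1/a`, and `1/(a+p) ≡ 1/a (mod p)`. The congruences are
handled through the `p`-adic norm, which is ultrametric.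
-/

open Finset

theorem pos_of_not_dvd {p a : ℕ} (h : ¬ p ∣ a) : 0 < a :=
  Nat.pos_of_ne_zero fun h0 => h (h0 ▸ dvd_zero p)

section Ultrametric

variable {R ι : Type*} [NormedCommRing R] [NormOneClass R] [IsUltrametricDist R]

theorem norm_prod_sub_prod_le (s : Finset ι) {f g : ι → R} {r : ℝ} (hr : 0 ≤ r)
    (hf : ∀ i ∈ s, ‖f i‖ ≤ 1) (hg : ∀ i ∈ s, ‖g i‖ ≤ 1) (hfg : ∀ i ∈ s, ‖f i - g i‖ ≤ r) :
    ‖∏ i ∈ s, f i - ∏ i ∈ s, g i‖ ≤ r := by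
  classical
  induction s using Finset.induction_on with
  | empty => simpa using hr
  | insert a s ha ih =>
    have ha' := mem_insert_self a s
    have hs : ∀ i ∈ s, i ∈ insert a s := fun i => mem_insert_of_mem
    have hgs : ‖∏ i ∈ s, g i‖ ≤ 1 := (Finset.norm_prod_le _ _).trans <|
      prod_le_one (fun _ _ => norm_nonneg _) fun i hi => hg i (hs i hi)
    rw [prod_insert ha, prod_insert ha, show f a * ∏ i ∈ s, f i - g a * ∏ i ∈ s, g i
      = f a * (∏ i ∈ s, f i - ∏ i ∈ s, g i) + (f a - g a) * ∏ i ∈ s, g i by ring]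
    refine (IsUltrametricDist.norm_add_le_max _ _).trans (max_le ?_ ?_)
    · calc ‖f a * (∏ i ∈ s, f i - ∏ i ∈ s, g i)‖
          ≤ 1 * r := (norm_mul_le _ _).trans <| mul_le_mul (hf a ha')
            (ih (fun i hi => hf i (hs i hi)) (fun i hi => hg i (hs i hi))
              fun i hi => hfg i (hs i hi)) (norm_nonneg _) zero_le_one
        _ = r := one_mul r
    · calc ‖(f a - g a) * ∏ i ∈ s, g i‖
          ≤ r * 1 := (norm_mul_le _ _).trans <|
            mul_le_mul (hfg a ha') hgs (norm_nonneg _) hr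
        _ = r := mul_one r

end Ultrametric

section Padic

variable {p : ℕ} [Fact p.Prime]

theorem norm_one_div_natCast {a : ℕ} (ha : ¬ p ∣ a) : ‖(1 / a : ℚ_[p])‖ = 1 := by
  rw [norm_div, norm_one, Padic.norm_natCast_eq_one_iff.2
    ((Nat.Prime.coprime_iff_not_dvd Fact.out).2 ha), div_one]

theorem norm_one_div_add_sub_one_div {a : ℕ} (ha : ¬ p ∣ a) :
    ‖(1 / (a + p : ℕ) - 1 / a : ℚ_[p])‖ = (p : ℝ)⁻¹ := by
  have ha' : ¬ p ∣ a + p := by rwa [Nat.dvd_add_self_right]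
  have h0 : (a : ℚ_[p]) ≠ 0 := by exact_mod_cast (pos_of_not_dvd ha).ne'
  have h0' : ((a + p : ℕ) : ℚ_[p]) ≠ 0 := by exact_mod_cast (pos_of_not_dvd ha').ne'
  have : (1 / (a + p : ℕ) - 1 / a : ℚ_[p]) = -(p * (1 / (a + p : ℕ) * (1 / a))) := by
    field_simp
    push_cast
    ring
  rw [this, norm_neg, norm_mul, norm_mul, Padic.norm_p, norm_one_div_natCast ha,
    norm_one_div_natCast ha', mul_one, mul_one]

theorem ratCong_one_of_norm_sub_le {x y : ℚ} (h : ‖((x - y : ℚ) : ℚ_[p])‖ ≤ (p : ℝ)⁻¹) :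
    ratCong p 1 x y := by
  have hp : (p : ℚ) ≠ 0 := by exact_mod_cast (Fact.out : p.Prime).ne_zero
  refine ⟨(x - y) / p, by rw [pow_one, mul_div_cancel₀ _ hp], fun hd => ?_⟩
  have hz : ‖(((x - y) / p : ℚ) : ℚ_[p])‖ ≤ 1 := by
    rw [Rat.cast_div, norm_div, Rat.cast_natCast, Padic.norm_p, div_inv_eq_mul]
    have : (0 : ℝ) < p := by exact_mod_cast (Fact.out : p.Prime).pos
    calc _ ≤ (p : ℝ)⁻¹ * p := mul_le_mul_of_nonneg_right h this.le
      _ = 1 := inv_mul_cancel₀ this.ne'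
  have := PadicInt.isUnit_den _ hz
  rw [PadicInt.isUnit_iff, PadicInt.norm_natCast_eq_one_iff] at this
  exact (Nat.Prime.coprime_iff_not_dvd Fact.out).1 this hd

end Padic

theorem sum_powerset_filter_neg_one_pow_card {α R : Type*} [Fintype α] [Ring R]
    (P : α → Prop) [DecidablePred P] :
    ∑ T ∈ (univ.filter P).powerset, (-1 : R) ^ T.card = if ∀ i, ¬ P i then 1 else 0 := by
  classical
  have := congrArg (Int.cast : ℤ → R) (sum_powerset_neg_one_pow_card (x := univ.filter P))
  push_cast at this
  simpa [filter_eq_empty_iff] using this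

theorem sum_range_choose_mul_eq_sum_powerset {R : Type*} [Semiring R] (n m : ℕ) (f : ℕ → R) :
    ∑ k ∈ range m, (n.choose k : R) * f k
      = ∑ T ∈ (univ : Finset (Fin n)).powerset, if T.card < m then f T.card else 0 := by
  rw [sum_powerset_apply_card (fun k => if k < m then f k else 0), card_univ, Fintype.card_fin]
  simp only [nsmul_eq_mul, mul_ite, mul_zero]
  rw [← sum_filter]
  refine (sum_subset (fun k hk => ?_) fun k hk hk' => ?_).symm
  · simp only [mem_filter, mem_range] at hk ⊢
    exact hk.2
  · simp only [mem_filter, mem_range, not_and, not_lt] at hk hk'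
    rw [Nat.choose_eq_zero_of_lt (by omega), Nat.cast_zero, zero_mul]

section Compositions

variable {p n N : ℕ}

def compositionsCoprime (p n N : ℕ) : Finset (Fin n → ℕ) :=
  (Fintype.piFinset fun _ : Fin n => Icc 1 N) |>.filter
    (fun l => ∑ i, l i = N ∧ ∀ i, ¬ p ∣ l i)

def invProd (l : Fin n → ℕ) : ℚ := ∏ i, (1 : ℚ) / l i

theorem hsum_eq_sum_compositionsCoprime :
    hsum p n N = ∑ l ∈ compositionsCoprime p n N, invProd l := rfl

theorem mem_compositionsCoprime {l : Fin n → ℕ} :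
    l ∈ compositionsCoprime p n N ↔ ∑ i, l i = N ∧ ∀ i, ¬ p ∣ l i := by
  refine ⟨fun h => (mem_filter.1 h).2, fun ⟨hsum, hcop⟩ => mem_filter.2 ⟨?_, hsum, hcop⟩⟩
  refine Fintype.mem_piFinset.2 fun i => mem_Icc.2 ⟨?_, ?_⟩
  · exact pos_of_not_dvd (hcop i)
  · exact hsum ▸ single_le_sum (fun j _ => Nat.zero_le (l j)) (mem_univ i)

theorem hsumLtCop_eq_sum_filter :
    hsumLtCop p n N = ∑ l ∈ compositionsCoprime p n N with ∀ i, l i < p, invProd l := by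
  refine sum_congr (ext fun l => ?_) fun _ _ => rfl
  simp only [mem_filter, Fintype.mem_piFinset, mem_Ico, mem_compositionsCoprime]
  constructor
  · rintro ⟨hl, hsum, hcop⟩
    exact ⟨⟨hsum, hcop⟩, fun i => (hl i).2⟩
  · rintro ⟨⟨hsum, hcop⟩, hlt⟩
    exact ⟨fun i => ⟨pos_of_not_dvd (hcop i), hlt i⟩, hsum, hcop⟩

def hsumGtOn (p n N : ℕ) (T : Finset (Fin n)) : ℚ :=
  ∑ l ∈ compositionsCoprime p n N with ∀ i ∈ T, p < l i, invProd l

theorem hsumLtCop_eq_sum_powerset :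
    hsumLtCop p n N = ∑ T ∈ univ.powerset, (-1) ^ T.card * hsumGtOn p n N T := by
  have hlt : ∀ l ∈ compositionsCoprime p n N, (∀ i, l i < p) ↔ ∀ i, ¬ p < l i := by
    intro l hl
    refine forall_congr' fun i => ⟨fun h => by omega, fun h => ?_⟩
    have : l i ≠ p := fun he => (mem_compositionsCoprime.1 hl).2 i (he ▸ dvd_refl p)
    omega
  rw [hsumLtCop_eq_sum_filter, sum_filter]
  calc ∑ l ∈ compositionsCoprime p n N, (if ∀ i, l i < p then invProd l else 0)
      = ∑ l ∈ compositionsCoprime p n N,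
          ∑ T ∈ (univ.filter fun i => p < l i).powerset, (-1) ^ T.card * invProd l := by
        refine sum_congr rfl fun l hl => ?_
        rw [← sum_mul, sum_powerset_filter_neg_one_pow_card]
        simp only [hlt l hl, ite_mul, one_mul, zero_mul]
    _ = ∑ T ∈ univ.powerset,
          ∑ l ∈ compositionsCoprime p n N with ∀ i ∈ T, p < l i, (-1) ^ T.card * invProd l :=
        sum_comm' fun l T => by simp [subset_iff, and_comm]
    _ = _ := by simp only [hsumGtOn, mul_sum]

def shiftOn (p : ℕ) (T : Finset (Fin n)) (l : Fin n → ℕ) : Fin n → ℕ :=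
  fun i => l i + if i ∈ T then p else 0

theorem sum_shiftOn (T : Finset (Fin n)) (l : Fin n → ℕ) :
    ∑ i, shiftOn p T l i = ∑ i, l i + T.card * p := by
  simp [shiftOn, sum_add_distrib, sum_ite_mem]

theorem dvd_shiftOn_iff (T : Finset (Fin n)) (l : Fin n → ℕ) (i : Fin n) :
    p ∣ shiftOn p T l i ↔ p ∣ l i := by
  unfold shiftOn
  split_ifs
  exacts [Nat.dvd_add_self_right, by rw [add_zero]]

theorem hsumGtOn_eq_sum_shiftOn {T : Finset (Fin n)} (hT : T.card * p ≤ N) :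
    hsumGtOn p n N T
      = ∑ l ∈ compositionsCoprime p n (N - T.card * p), invProd (shiftOn p T l) := by
  set unshift : (Fin n → ℕ) → Fin n → ℕ := fun l i => l i - if i ∈ T then p else 0
  have shiftOn_unshift : ∀ l : Fin n → ℕ, (∀ i ∈ T, p < l i) → shiftOn p T (unshift l) = l :=
    fun l hl => funext fun i => by
      by_cases hi : i ∈ T <;> simp only [shiftOn, unshift, hi, if_true, if_false] <;> grind
  have unshift_shiftOn : ∀ l, unshift (shiftOn p T l) = l :=
    fun l => funext fun i => by simp [shiftOn, unshift]
  symm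
  refine sum_nbij' (shiftOn p T) unshift (fun l hl => ?_) (fun l hl => ?_)
    (fun l _ => unshift_shiftOn l) (fun l hl => shiftOn_unshift l (mem_filter.1 hl).2)
    fun _ _ => rfl
  · obtain ⟨hsum, hcop⟩ := mem_compositionsCoprime.1 hl
    refine mem_filter.2 ⟨mem_compositionsCoprime.2 ⟨?_, fun i => ?_⟩, fun i hi => ?_⟩
    · rw [sum_shiftOn, hsum, Nat.sub_add_cancel hT]
    · rw [dvd_shiftOn_iff]; exact hcop i
    · simp only [shiftOn, hi, if_true]
      have := pos_of_not_dvd (hcop i)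
      omega
  · obtain ⟨hl, hgt⟩ := mem_filter.1 hl
    obtain ⟨hsum, hcop⟩ := mem_compositionsCoprime.1 hl
    rw [← shiftOn_unshift l hgt] at hsum hcop
    refine mem_compositionsCoprime.2 ⟨?_, fun i => ?_⟩
    · rw [sum_shiftOn] at hsum; omega
    · rw [← dvd_shiftOn_iff (T := T)]; exact hcop i

theorem hsumGtOn_eq_zero_of_lt {T : Finset (Fin n)} (h : N < T.card * (p + 1)) :
    hsumGtOn p n N T = 0 := by
  refine sum_eq_zero fun l hl => absurd h (not_lt.2 ?_)
  obtain ⟨hl, hgt⟩ := mem_filter.1 hl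
  calc T.card * (p + 1) = ∑ _i ∈ T, (p + 1) := by rw [sum_const, smul_eq_mul]
    _ ≤ ∑ i ∈ T, l i := sum_le_sum hgt
    _ ≤ ∑ i, l i := sum_le_sum_of_subset (subset_univ T)
    _ = N := (mem_compositionsCoprime.1 hl).1

end Compositions

section Congruences

variable {p n N : ℕ} [Fact p.Prime]

theorem norm_invProd_shiftOn_sub_invProd (T : Finset (Fin n)) {l : Fin n → ℕ}
    (hl : ∀ i, ¬ p ∣ l i) :
    ‖((invProd (shiftOn p T l) - invProd l : ℚ) : ℚ_[p])‖ ≤ (p : ℝ)⁻¹ := by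
  simp only [invProd, Rat.cast_sub, Rat.cast_prod, Rat.cast_div, Rat.cast_one, Rat.cast_natCast]
  refine norm_prod_sub_prod_le univ (by positivity)
    (fun i _ => (norm_one_div_natCast ((dvd_shiftOn_iff T l i).not.2 (hl i))).le)
    (fun i _ => (norm_one_div_natCast (hl i)).le) fun i _ => ?_
  by_cases hi : i ∈ T
  · simp only [shiftOn, hi, if_true]
    exact (norm_one_div_add_sub_one_div (hl i)).le
  · simp only [shiftOn, hi, if_false, add_zero, sub_self, norm_zero]
    positivity

theorem norm_hsumGtOn_sub_hsum_le {T : Finset (Fin n)} (hT : T.card * p ≤ N) :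
    ‖((hsumGtOn p n N T - hsum p n (N - T.card * p) : ℚ) : ℚ_[p])‖ ≤ (p : ℝ)⁻¹ := by
  rw [hsumGtOn_eq_sum_shiftOn hT, hsum_eq_sum_compositionsCoprime, ← sum_sub_distrib,
    Rat.cast_sum]
  exact IsUltrametricDist.norm_sum_le_of_forall_le_of_nonneg (by positivity) fun l hl =>
    norm_invProd_shiftOn_sub_invProd T (mem_compositionsCoprime.1 hl).2

end Congruences

theorem stmt_2_general (p m n : ℕ) (hp : p.Prime) (hm : 1 ≤ m) :
    ratCong p 1 (hsumLtCop p n (m * p))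
      (∑ k ∈ Finset.range m, (n.choose k : ℚ) * (-1) ^ k * hsum p n ((m - k) * p)) := by
  have := Fact.mk hp
  apply ratCong_one_of_norm_sub_le
  simp only [mul_assoc]
  rw [hsumLtCop_eq_sum_powerset, sum_range_choose_mul_eq_sum_powerset, ← sum_sub_distrib,
    Rat.cast_sum]
  refine IsUltrametricDist.norm_sum_le_of_forall_le_of_nonneg (by positivity) fun T _ => ?_
  split_ifs with hT
  · rw [← mul_sub, Rat.cast_mul, norm_mul, Rat.cast_pow, Rat.cast_neg, Rat.cast_one, norm_pow,
      norm_neg, norm_one, one_pow, one_mul, Nat.sub_mul]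
    exact norm_hsumGtOn_sub_hsum_le (Nat.mul_le_mul_right p hT.le)
  · rw [hsumGtOn_eq_zero_of_lt (by nlinarith), mul_zero, sub_zero, Rat.cast_zero, norm_zero]
    positivity

theorem stmt_2 (p m n : ℕ) (hp : p.Prime) (hm : 1 ≤ m) (hmn : m < n) :
    ratCong p 1 (hsumLtCop p n (m * p))
      (∑ k ∈ Finset.range m, (n.choose k : ℚ) * (-1) ^ k * hsum p n ((m - k) * p)) :=
  stmt_2_general p m n hp hm
end

section
/- For a prime p ≥ 7, let C_a^{(1)} be the number of 6-tuples (x_1,…,x_6) with 0 ≤ x_i < p and Σx_i = p - a. Then C_1^{(1)} + C_5^{(1)} ≡ (2/5)p (mod p²), C_2^{(1)} + C_4^{(1)} ≡ -(1/10)p (mod p²), and C_3^{(1)} ≡ (1/30)p (mod p²). -/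
/-- `C_a^{(m)}`: number of 6-tuples `(x₁,…,x₆)` with `0 ≤ xᵢ < p` and `Σ xᵢ = m·p - a`. -/
def Cam (p m a : ℕ) : ℕ :=
  ((Fintype.piFinset fun _ : Fin 6 => Finset.range p).filter
    (fun x => (∑ i, (x i : ℤ)) = m * p - a)).card

lemma list_sum_range (n : ℕ) (f : ℕ → ℕ) :
    ((List.range n).map f).sum = ∑ i ∈ Finset.range n, f i := rfl

lemma length_adt : ∀ k n, (List.Nat.antidiagonalTuple (k + 1) n).length = (n + k).choose k := by
  intro k
  induction k with
  | zero => intro n; rw [List.Nat.antidiagonalTuple_one]; simp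
  | succ k ih =>
    intro n
    rw [List.Nat.antidiagonalTuple, List.length_flatMap, List.Nat.antidiagonal, List.map_map,
      list_sum_range]
    simp only [Function.comp_apply, List.length_map, ih]
    have hrefl := Finset.sum_range_reflect (fun j => (j + k).choose k) (n + 1)
    simp only [Nat.add_sub_cancel] at hrefl
    rw [hrefl, Nat.sum_range_add_choose n k]
    congr 1

lemma cam_eq (p a : ℕ) (h1 : 1 ≤ a) (h2 : a ≤ 5) (hp : 5 < p) :
    Cam p 1 a = (p - a + 5).choose 5 := by
  have hap : a ≤ p := le_trans h2 (le_of_lt hp)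
  have hset : ((Fintype.piFinset fun _ : Fin 6 => Finset.range p).filter
      (fun x => (∑ i, (x i : ℤ)) = (1 : ℕ) * p - a)) = Finset.Nat.antidiagonalTuple 6 (p - a) := by
    ext x
    simp only [Finset.mem_filter, Fintype.mem_piFinset, Finset.mem_range,
      Finset.Nat.mem_antidiagonalTuple]
    constructor
    · rintro ⟨hx, hs⟩
      push_cast at hs
      have : ((∑ i, x i : ℕ) : ℤ) = ((p - a : ℕ) : ℤ) := by
        push_cast [Nat.cast_sub hap]
        linarith
      exact_mod_cast this
    · intro hs
      have hbd : ∀ i, x i < p := by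
        intro i
        have hle : x i ≤ ∑ j, x j :=
          Finset.single_le_sum (fun j _ => Nat.zero_le _) (Finset.mem_univ i)
        rw [hs] at hle
        omega
      refine ⟨hbd, ?_⟩
      have := congrArg (fun n : ℕ => (n : ℤ)) hs
      push_cast [Nat.cast_sub hap] at this
      push_cast
      linarith
  have : Cam p 1 a = (Finset.Nat.antidiagonalTuple 6 (p - a)).card := congrArg Finset.card hset
  rw [this]
  exact length_adt 5 (p - a)

lemma desc5 (N : ℕ) :
    (N + 5).descFactorial 5 = (N + 1) * (N + 2) * (N + 3) * (N + 4) * (N + 5) := by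
  simp [Nat.descFactorial_succ, Nat.descFactorial_zero]
  ring_nf

lemma cam_cast (p a : ℕ) (h1 : 1 ≤ a) (h2 : a ≤ 5) (hp : 5 < p) :
    (Cam p 1 a : ℚ) * 120 = ((p : ℚ) - a + 1) * ((p : ℚ) - a + 2) * ((p : ℚ) - a + 3) *
      ((p : ℚ) - a + 4) * ((p : ℚ) - a + 5) := by
  have hap : a ≤ p := le_trans h2 (le_of_lt hp)
  rw [cam_eq p a h1 h2 hp]
  have hnat : (p - a + 5).choose 5 * 120 =
      (p - a + 1) * (p - a + 2) * (p - a + 3) * (p - a + 4) * (p - a + 5) := by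
    have h := Nat.descFactorial_eq_factorial_mul_choose (p - a + 5) 5
    rw [desc5] at h
    rw [show Nat.factorial 5 = 120 from rfl] at h
    omega
  have := congrArg (fun n : ℕ => (n : ℚ)) hnat
  push_cast [Nat.cast_sub hap] at this
  convert this using 2

lemma den_helper (p : ℕ) (hp : p.Prime) (hp7 : 7 ≤ p) (n m : ℤ) (hm : m ∣ 120) :
    ¬ (p ∣ ((n : ℚ) / (m : ℚ)).den) := by
  intro h
  have hd : (((n : ℚ) / (m : ℚ)).den : ℤ) ∣ m := by
    rw [← Rat.divInt_eq_div]; exact Rat.den_dvd n m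
  have hz : (p : ℤ) ∣ 120 := dvd_trans (Int.natCast_dvd_natCast.mpr h) (dvd_trans hd hm)
  have hp120 : p ∣ 120 := by exact_mod_cast hz
  have hfac : p ∣ Nat.factorial 5 := by simpa [Nat.factorial] using hp120
  have := (Nat.Prime.dvd_factorial hp).mp hfac
  omega

theorem stmt_6 (p : ℕ) (hp : p.Prime) (hp7 : 7 ≤ p) :
    ratCong p 2 ((Cam p 1 1 : ℚ) + Cam p 1 5 : ℚ) ((2 / 5 : ℚ) * p) ∧
    ratCong p 2 ((Cam p 1 2 : ℚ) + Cam p 1 4 : ℚ) (-(1 / 10 : ℚ) * p) ∧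
    ratCong p 2 ((Cam p 1 3 : ℚ)) ((1 / 30 : ℚ) * p) := by
  have h5p : 5 < p := by omega
  have h1 := cam_cast p 1 (by norm_num) (by norm_num) h5p
  have h2 := cam_cast p 2 (by norm_num) (by norm_num) h5p
  have h3 := cam_cast p 3 (by norm_num) (by norm_num) h5p
  have h4 := cam_cast p 4 (by norm_num) (by norm_num) h5p
  have h5 := cam_cast p 5 (by norm_num) (by norm_num) h5p
  refine ⟨⟨((((p : ℤ) ^ 3 + 35 * p : ℤ) : ℚ)) / (((60 : ℤ) : ℚ)), ?_,
      den_helper p hp hp7 _ _ (by norm_num)⟩,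
    ⟨((((p : ℤ) ^ 3 + 5 * p : ℤ) : ℚ)) / (((60 : ℤ) : ℚ)), ?_,
      den_helper p hp hp7 _ _ (by norm_num)⟩,
    ⟨((((p : ℤ) ^ 3 - 5 * p : ℤ) : ℚ)) / (((120 : ℤ) : ℚ)), ?_,
      den_helper p hp hp7 _ _ (by norm_num)⟩⟩
  · push_cast
    linear_combination h1 / 120 + h5 / 120
  · push_cast
    linear_combination h2 / 120 + h4 / 120
  · push_cast
    linear_combination h3 / 120
end

section
/- For a prime p ≥ 7 and 1 ≤ a ≤ 5, let C_a^{(2)} be the number of 6-tuples (x_1,…,x_6) with 0 ≤ x_i < p and Σx_i = 2p - a. Then C_1^{(2)} + C_5^{(2)} ≡ -(8/5)p (mod p²), C_2^{(2)} + C_4^{(2)} ≡ (2/5)p (mod p²), and C_3^{(2)} ≡ -(2/15)p (mod p²). -/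
open Finset Finset.Nat
open scoped Nat

theorem card_antidiagonalTuple_succ (k N : ℕ) :
    #(antidiagonalTuple (k + 1) N) = (N + k).choose k := by
  rw [← piAntidiag_univ_fin_eq_antidiagonalTuple, ← map_sym_eq_piAntidiag, card_map, sym_univ,
    card_univ, Sym.card_sym_eq_choose, Fintype.card_fin, show k + 1 + N - 1 = N + k by omega,
    Nat.choose_symm_add]

theorem Pi.single_le_of_le {ι : Type*} [DecidableEq ι] {x : ι → ℕ} {i : ι} {p : ℕ}
    (h : p ≤ x i) : Pi.single i p ≤ x := by
  intro j
  rcases eq_or_ne j i with rfl | hj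
  · simpa using h
  · simp [hj]

theorem card_filter_le_apply_antidiagonalTuple (k N p : ℕ) (i : Fin k) :
    #((antidiagonalTuple k (N + p)).filter (fun x => p ≤ x i)) = #(antidiagonalTuple k N) := by
  symm
  apply card_nbij' (· + Pi.single i p) (· - Pi.single i p)
  · intro y hy
    simp only [coe_filter, mem_coe, mem_antidiagonalTuple, Set.mem_ofPred_eq] at hy ⊢
    simp [sum_add_distrib, hy]
  · intro x hx
    simp only [coe_filter, mem_antidiagonalTuple, Set.mem_ofPred_eq, mem_coe] at hx ⊢
    have hle : Pi.single i p ≤ x := Pi.single_le_of_le hx.2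
    have := congrArg (fun y : Fin k → ℕ => ∑ j, y j) (tsub_add_cancel_of_le hle)
    simp only [Pi.add_apply, sum_add_distrib, Finset.sum_pi_single', mem_univ, if_true] at this
    omega
  · intro y _
    exact add_tsub_cancel_right y _
  · intro x hx
    simp only [coe_filter, Set.mem_ofPred_eq] at hx
    exact tsub_add_cancel_of_le (Pi.single_le_of_le hx.2)

theorem card_filter_lt_antidiagonalTuple_add (k N p : ℕ) (hN : N < p) :
    #((antidiagonalTuple k (N + p)).filter (fun x => ∀ i, x i < p)) + k * #(antidiagonalTuple k N)
      = #(antidiagonalTuple k (N + p)) := by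
  set T := antidiagonalTuple k (N + p)
  have hdisj : ((univ : Finset (Fin k)) : Set (Fin k)).PairwiseDisjoint
      (fun i => T.filter (p ≤ · i)) := by
    intro i _ j _ hij
    refine disjoint_left.2 fun x hxi hxj => ?_
    simp only [T, mem_filter, mem_antidiagonalTuple] at hxi hxj
    have := add_le_sum (fun l _ => Nat.zero_le (x l)) (mem_univ i) (mem_univ j) hij
    omega
  have hcompl :
      T.filter (fun x => ¬ ∀ i, x i < p) = univ.biUnion (fun i => T.filter (p ≤ · i)) := by
    ext x
    simp [not_forall]
  conv_rhs => rw [← card_filter_add_card_filter_not (fun x => ∀ i, x i < p), hcompl,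
    card_biUnion hdisj]
  simp [T, card_filter_le_apply_antidiagonalTuple]

theorem cam_two_eq_card (p a : ℕ) (ha : a ≤ p) :
    Cam p 2 a = #((antidiagonalTuple 6 (p - a + p)).filter (fun x => ∀ i, x i < p)) := by
  unfold Cam
  congr 1
  ext x
  simp only [mem_filter, Fintype.mem_piFinset, mem_range, mem_antidiagonalTuple]
  rw [and_comm]
  refine and_congr_left fun _ => ?_
  rw [← Nat.cast_sum]
  omega

theorem cam_two_add (p a : ℕ) (ha0 : 0 < a) (ha : a ≤ p) :
    Cam p 2 a + 6 * (p - a + 5).choose 5 = (p - a + p + 5).choose 5 := by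
  rw [cam_two_eq_card p a ha, ← card_antidiagonalTuple_succ, ← card_antidiagonalTuple_succ]
  exact card_filter_lt_antidiagonalTuple_add 6 (p - a) p (by omega)

def chooseFive (x : ℚ) : ℚ := (x + 1) * (x + 2) * (x + 3) * (x + 4) * (x + 5) / 5 !

theorem cast_choose_five (m : ℕ) : ((m + 5).choose 5 : ℚ) = chooseFive m := by
  rw [chooseFive, Nat.cast_choose_eq_ascPochhammer_div]
  simp only [Nat.add_one_sub_one, Nat.reduceSubDiff, Nat.cast_add, Nat.cast_one,
    ascPochhammer_succ_eval, ascPochhammer_one, Polynomial.eval_X, Nat.cast_ofNat]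
  ring

theorem cam_two_eq_chooseFive (p a : ℕ) (ha0 : 0 < a) (ha : a ≤ p) :
    (Cam p 2 a : ℚ) = chooseFive (2 * p - a) - 6 * chooseFive (p - a) := by
  have h := congrArg (Nat.cast : ℕ → ℚ) (cam_two_add p a ha0 ha)
  push_cast [cast_choose_five, Nat.cast_sub ha] at h
  rw [show (p : ℚ) - a + p = 2 * p - a by ring] at h
  linear_combination h

theorem ratCong_of_sub_eq_div_factorial {p k : ℕ} (hp : p.Prime) (hk : k < p) (r : ℕ) {x y : ℚ}
    (n : ℤ) (h : x - y = p ^ r * (n / k !)) : ratCong p r x y := by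
  refine ⟨_, h, fun hdvd => hk.not_ge ((hp.dvd_factorial).1 ?_)⟩
  have hden : ((n / k ! : ℚ).den : ℤ) ∣ (k ! : ℕ) := by
    rw [show (k ! : ℚ) = ((k ! : ℕ) : ℤ) by norm_cast, ← Rat.divInt_eq_div]
    exact Rat.den_dvd _ _
  exact_mod_cast (Int.natCast_dvd_natCast.2 hdvd).trans hden

theorem stmt_7 (p : ℕ) (hp : p.Prime) (hp7 : 7 ≤ p) :
    ratCong p 2 ((Cam p 2 1 : ℚ) + Cam p 2 5 : ℚ) (-(8 / 5 : ℚ) * p) ∧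
    ratCong p 2 ((Cam p 2 2 : ℚ) + Cam p 2 4 : ℚ) ((2 / 5 : ℚ) * p) ∧
    ratCong p 2 ((Cam p 2 3 : ℚ)) (-(2 / 15 : ℚ) * p) := by
  have hC (a : ℕ) (ha0 : 0 < a) (ha5 : a ≤ 5) := cam_two_eq_chooseFive p a ha0 (by omega)
  refine ⟨ratCong_of_sub_eq_div_factorial (k := 5) hp (by omega) 2 (4 * p * (35 + 13 * p ^ 2)) ?_,
    ratCong_of_sub_eq_div_factorial (k := 5) hp (by omega) 2 (4 * p * (5 + 13 * p ^ 2)) ?_,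
    ratCong_of_sub_eq_div_factorial (k := 5) hp (by omega) 2 (2 * p * (13 * p ^ 2 - 5)) ?_⟩
  all_goals
    simp only [hC 1 (by norm_num) (by norm_num), hC 2 (by norm_num) (by norm_num),
      hC 3 (by norm_num) (by norm_num), hC 4 (by norm_num) (by norm_num),
      hC 5 (by norm_num) (by norm_num), chooseFive, Nat.factorial]
    push_cast
    ring
end

section
/- For a prime p ≥ 7 and 1 ≤ a ≤ 5, let C_a^{(3)} be the number of 6-tuples (x_1,…,x_6) with 0 ≤ x_i < p and Σx_i = 3p - a. Then C_1^{(3)} + C_5^{(3)} ≡ (12/5)p (mod p²), C_2^{(3)} + C_4^{(3)} ≡ -(3/5)p (mod p²), and C_3^{(3)} ≡ (1/5)p (mod p²). -/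
/-!
Expanding `(1 + X + ⋯ + X^(p-1))^6 = (1 - X^p)^6 / (1 - X)^6` (inclusion–exclusion) gives, for
`1 ≤ a ≤ p`, `C_a^{(3)} = C(3p-a+5, 5) - 6 C(2p-a+5, 5) + 15 C(p-a+5, 5)`, a polynomial in `p`.
Subtracting the claimed values leaves `p²(11p² - 35)/10`, `p²(11p² - 5)/10` and
`p²(11p² + 5)/20`, whose denominators are prime to any prime `p ≥ 7`.
-/

open Finset PowerSeries

theorem card_filter_piFinset_range_sum_eq_coeff (R : Type*) [CommSemiring R] {ι : Type*}
    [Fintype ι] [DecidableEq ι] (p n : ℕ) :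
    (#{x ∈ Fintype.piFinset fun _ : ι => range p | ∑ i, x i = n} : R) =
      coeff n ((∑ i ∈ range p, X ^ i : R⟦X⟧) ^ Fintype.card ι) := by
  rw [← card_univ, ← prod_const, prod_univ_sum, map_sum]
  simp only [prod_pow_eq_pow_sum, coeff_X_pow, card_filter, Nat.cast_sum, eq_comm (a := n)]
  push_cast
  rfl

theorem coeff_geom_sum_pow (R : Type*) [CommRing R] (p d n : ℕ) :
    coeff n ((∑ i ∈ range p, X ^ i : R⟦X⟧) ^ (d + 1)) =
      ∑ j ∈ range (d + 2), (-1) ^ j * ((d + 1).choose j : R) *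
        if p * j ≤ n then ((d + (n - p * j)).choose d : R) else 0 := by
  have h : (∑ i ∈ range p, X ^ i : R⟦X⟧) ^ (d + 1) =
      (-X ^ p + 1) ^ (d + 1) * PowerSeries.mk fun n => ((d + n).choose d : R) := by
    rw [← sub_eq_neg_add, ← geom_sum_mul_neg, mul_pow, mul_assoc, mul_comm ((1 - X) ^ _),
      mk_add_choose_mul_one_sub_pow_eq_one, mul_one]
  rw [h, add_pow, sum_mul, map_sum]
  refine sum_congr rfl fun j _ => ?_
  rw [show (-X ^ p) ^ j * 1 ^ (d + 1 - j) * ((d + 1).choose j : R⟦X⟧) *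
      PowerSeries.mk (fun n => ((d + n).choose d : R)) =
      C ((-1) ^ j * ((d + 1).choose j : R)) *
        (X ^ (p * j) * PowerSeries.mk fun n => ((d + n).choose d : R)) by
    simp only [map_mul, map_pow, map_neg, map_one, map_natCast, pow_mul]; ring,
    coeff_C_mul, coeff_X_pow_mul', coeff_mk]

theorem Cam_eq_sum_choose (R : Type*) [CommRing R] {p m a : ℕ} (hm : 0 < m) (ha : 0 < a)
    (hap : a ≤ p) :
    (Cam p m a : R) =
      ∑ j ∈ range m, (-1) ^ j * (Nat.choose 6 j : R) * (((m - j) * p - a + 5).choose 5 : R) := by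
  have hamp : a ≤ m * p := hap.trans (Nat.le_mul_of_pos_left p hm)
  have hcount : Cam p m a =
      #{x ∈ Fintype.piFinset fun _ : Fin 6 => range p | ∑ i, x i = m * p - a} := by
    refine congrArg card (filter_congr fun x _ => ?_)
    rw [← Nat.cast_sum]
    omega
  have hterm : ∀ j ∈ range 7, (-1) ^ j * (Nat.choose 6 j : R) *
      (if p * j ≤ m * p - a then ((5 + (m * p - a - p * j)).choose 5 : R) else 0) =
      if j ∈ range m then
        (-1) ^ j * (Nat.choose 6 j : R) * (((m - j) * p - a + 5).choose 5 : R) else 0 := by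
    intro j _
    by_cases hj : j < m
    · have hjp : p * j + p ≤ m * p := by nlinarith
      have hsub : m * p - a - p * j = (m - j) * p - a := by
        rw [Nat.sub_mul, mul_comm j]; omega
      rw [if_pos (by omega), if_pos (mem_range.2 hj), hsub, add_comm 5]
    · have hjp : m * p ≤ p * j := by nlinarith
      rw [if_neg (by omega), if_neg (by simpa using hj), mul_zero]
  rw [hcount, card_filter_piFinset_range_sum_eq_coeff, Fintype.card_fin, coeff_geom_sum_pow,
    sum_congr rfl hterm, sum_ite_mem]
  refine sum_subset inter_subset_right fun j _ hj => ?_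
  have : 6 < j := by simp only [mem_inter, mem_range, not_and] at *; omega
  rw [Nat.choose_eq_zero_of_lt this, Nat.cast_zero, mul_zero, zero_mul]

def binomFive (t : ℚ) : ℚ := (t + 1) * (t + 2) * (t + 3) * (t + 4) * (t + 5) / 120

theorem cast_choose_add_five (n : ℕ) : ((n + 5).choose 5 : ℚ) = binomFive n := by
  rw [Nat.cast_choose_eq_ascPochhammer_div, binomFive]
  simp only [ascPochhammer_succ_eval, ascPochhammer_zero, Polynomial.eval_one, Nat.factorial]
  push_cast
  ring

theorem cast_Cam_three {p a : ℕ} (ha : 0 < a) (hap : a ≤ p) :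
    (Cam p 3 a : ℚ) =
      binomFive (3 * p - a) - 6 * binomFive (2 * p - a) + 15 * binomFive (p - a) := by
  have h3 : a ≤ 3 * p := by omega
  have h2 : a ≤ 2 * p := by omega
  rw [Cam_eq_sum_choose ℚ (m := 3) (by norm_num) ha hap, sum_range_succ, sum_range_succ,
    sum_range_one]
  norm_num [cast_choose_add_five, Nat.cast_sub, Nat.choose_two_right, h3, h2, hap]
  ring

theorem ratCong_of_sub_eq_pow_mul_div {p r : ℕ} (hp : p ≠ 1) {x y : ℚ} (A : ℤ) {d : ℕ}
    (hd : p.Coprime d) (h : x - y = p ^ r * (A / d)) : ratCong p r x y := by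
  refine ⟨_, h, fun hdvd => hp (hd.eq_one_of_dvd (hdvd.trans ?_))⟩
  have := Rat.den_dvd A d
  rw [Rat.divInt_eq_div] at this
  exact_mod_cast this

theorem stmt_8 (p : ℕ) (hp : p.Prime) (hp7 : 7 ≤ p) :
    ratCong p 2 ((Cam p 3 1 : ℚ) + Cam p 3 5 : ℚ) ((12 / 5 : ℚ) * p) ∧
    ratCong p 2 ((Cam p 3 2 : ℚ) + Cam p 3 4 : ℚ) (-(3 / 5 : ℚ) * p) ∧
    ratCong p 2 ((Cam p 3 3 : ℚ)) ((1 / 5 : ℚ) * p) := by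
  have h20 : p.Coprime 20 := hp.coprime_iff_not_dvd.2 fun h => by
    rcases hp.dvd_mul.1 (show p ∣ 4 * 5 from h) with h | h <;>
      linarith [Nat.le_of_dvd (by norm_num) h]
  have h10 : p.Coprime 10 := h20.coprime_dvd_right (by norm_num)
  rw [cast_Cam_three one_pos (by omega), cast_Cam_three two_pos (by omega),
    cast_Cam_three three_pos (by omega), cast_Cam_three four_pos (by omega),
    cast_Cam_three (by norm_num : 0 < 5) (by omega)]
  refine ⟨ratCong_of_sub_eq_pow_mul_div hp.ne_one (11 * p ^ 3 - 35 * p) h10 ?_,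
    ratCong_of_sub_eq_pow_mul_div hp.ne_one (11 * p ^ 3 - 5 * p) h10 ?_,
    ratCong_of_sub_eq_pow_mul_div hp.ne_one (11 * p ^ 3 + 5 * p) h20 ?_⟩ <;>
  · simp only [binomFive]; push_cast; ring
end
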